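/- arXiv:1904.04470 — 2 statements merged into one kernel-verified Lean document; each statement's English description precedes it below -/
import Mathlib

section
/- Let R be a nonzero commutative ring with a subset S and a family T satisfying (N1), (N2), (N3), and suppose |S| ≥ 2. Then the sum of all elements of S equals 1. -/
/-! Elements `t ∈ T` act on `S` as idempotent selectors, and (N3) lets some `t` fix one of two
distinct elements of `S` while killing the other; hence distinct elements of `S` are orthogonal.
Uniqueness of the representation of `0` forces `0 ∉ S`. Writing `1 = ∑ F` with `F ⊆ S`, every
`s ∈ S \ F` satisfies `s = s * ∑ F = 0`, so `F = S`. -/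

section

variable {R : Type*} [CommSemiring R]

theorem mul_eq_zero_of_mul_eq_zero_of_mul_eq_self {t s a : R} (hs : t * s = 0) (ha : t * a = a) :
    s * a = 0 :=
  calc s * a = s * (t * a) := by rw [ha]
    _ = (t * s) * a := by ring
    _ = 0 := by rw [hs, zero_mul]

theorem pairwise_mul_eq_zero_of_separated {S : Finset R} {T : Set R}
    (hN2 : ∀ t ∈ T, ∀ s ∈ S, t * s = 0 ∨ t * s = s)
    (hN3 : ∀ s ∈ S, ∀ s' ∈ S, s ≠ s' →
      ∃ t ∈ T, (t * s = 0 ∧ t * s' ≠ 0) ∨ (t * s ≠ 0 ∧ t * s' = 0)) :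
    (S : Set R).Pairwise fun s a => s * a = 0 := by
  intro s hs a ha hne
  obtain ⟨t, htT, ⟨hts, hta⟩ | ⟨hts, hta⟩⟩ := hN3 s hs a ha hne
  · exact mul_eq_zero_of_mul_eq_zero_of_mul_eq_self hts ((hN2 t htT a ha).resolve_left hta)
  · rw [mul_comm]
    exact mul_eq_zero_of_mul_eq_zero_of_mul_eq_self hta ((hN2 t htT s hs).resolve_left hts)

theorem superset_of_sum_eq_one {S F : Finset R} (horth : (S : Set R).Pairwise fun s a => s * a = 0)
    (hS0 : (0 : R) ∉ S) (hFS : F ⊆ S) (hF : ∑ a ∈ F, a = 1) : S ⊆ F := by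
  intro s hs
  by_contra hsF
  have hs0 : s = 0 :=
    calc s = s * ∑ a ∈ F, a := by rw [hF, mul_one]
      _ = ∑ a ∈ F, s * a := Finset.mul_sum _ _ _
      _ = 0 := Finset.sum_eq_zero fun a ha =>
        horth hs (hFS ha) fun hsa => hsF (hsa ▸ ha)
  exact hS0 (hs0 ▸ hs)

end

theorem zero_notMem_of_existsUnique_subset_sum_eq_zero {M : Type*} [AddCommMonoid M]
    {S : Finset M} (h : ∃! F : Finset M, F ⊆ S ∧ ∑ a ∈ F, a = 0) : (0 : M) ∉ S := fun h0 =>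
  Finset.singleton_ne_empty (0 : M) <|
    h.unique ⟨Finset.singleton_subset_iff.mpr h0, Finset.sum_singleton id 0⟩
      ⟨Finset.empty_subset S, Finset.sum_empty⟩

theorem stmt_3_general {R : Type*} [CommRing R] (S : Finset R) (T : Set R)
    (hN1 : ∀ x : R, ∃! F : Finset R, F ⊆ S ∧ ∑ a ∈ F, a = x)
    (hN2 : ∀ t ∈ T, ∀ s ∈ S, t * s = 0 ∨ t * s = s)
    (hN3 : ∀ s ∈ S, ∀ s' ∈ S, s ≠ s' →
      ∃ t ∈ T, (t * s = 0 ∧ t * s' ≠ 0) ∨ (t * s ≠ 0 ∧ t * s' = 0)) :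
    ∑ s ∈ S, s = 1 := by
  obtain ⟨F, ⟨hFS, hF⟩, -⟩ := hN1 1
  have hSF : S ⊆ F := superset_of_sum_eq_one (pairwise_mul_eq_zero_of_separated hN2 hN3)
    (zero_notMem_of_existsUnique_subset_sum_eq_zero (hN1 0)) hFS hF
  rwa [← hFS.antisymm hSF]

/-- Under (N1), (N2), (N3), with `S` finite of size at least two,
the sum of all elements of `S` equals `1`. -/
theorem stmt_3 {R : Type*} [CommRing R] [Nontrivial R] (S : Finset R) (T : Set R)
    (hS : 2 ≤ S.card)
    (hN1 : ∀ x : R, ∃! F : Finset R, F ⊆ S ∧ ∑ a ∈ F, a = x)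
    (hN2 : ∀ t ∈ T, ∀ s ∈ S, t * s = 0 ∨ t * s = s)
    (hN3 : ∀ s ∈ S, ∀ s' ∈ S, s ≠ s' →
      ∃ t ∈ T, (t * s = 0 ∧ t * s' ≠ 0) ∨ (t * s ≠ 0 ∧ t * s' = 0)) :
    ∑ s ∈ S, s = 1 :=
  stmt_3_general S T hN1 hN2 hN3
end

section
/- If neuron i of a code C ⊆ F₂^m is redundant to α (meaning i ∉ α, Tk_i(C) = Tk_α(C), and not every word of C has 0 in position i), then the deletion map del_i : C → del_i(C) is injective. -/
/-! Since `Tk_i(C) = Tk_α(C)`, whether `w i = 1` is decided by the coordinates of `w` in `α`,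
and over `F₂` this determines `w i`. As `i ∉ α`, those coordinates survive the deletion of `i`,
so `w` is recovered from `del_i w`. -/

/-- The trunk of a code `C`, as a subset of `C`, determined by `α`. -/
def trunkIn {n : ℕ} (C : Set (Fin n → ZMod 2)) (α : Set (Fin n)) : Set ↥C :=
  {w : ↥C | ∀ i ∈ α, w.1 i = 1}

theorem mem_trunkIn_singleton {n : ℕ} {C : Set (Fin n → ZMod 2)} {i : Fin n} {w : ↥C} :
    w ∈ trunkIn C {i} ↔ w.1 i = 1 := by
  simp [trunkIn]

theorem ZMod.eq_of_eq_one_iff_eq_one {x y : ZMod 2} (h : x = 1 ↔ y = 1) : x = y := by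
  revert x y
  decide

theorem apply_eq_of_trunkIn_singleton_eq {n : ℕ} {C : Set (Fin n → ZMod 2)} {i : Fin n}
    {α : Set (Fin n)} (htrunk : trunkIn C {i} = trunkIn C α) {w v : ↥C}
    (hwv : Set.EqOn w.1 v.1 α) : w.1 i = v.1 i := by
  refine ZMod.eq_of_eq_one_iff_eq_one ?_
  rw [← mem_trunkIn_singleton, ← mem_trunkIn_singleton, htrunk]
  exact forall₂_congr fun j hj => by rw [hwv hj]

theorem Fin.eqOn_of_comp_succAbove_eq {n : ℕ} {β : Type*} {i : Fin (n + 1)}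
    {s : Set (Fin (n + 1))} (hi : i ∉ s) {w v : Fin (n + 1) → β}
    (h : w ∘ i.succAbove = v ∘ i.succAbove) : Set.EqOn w v s := by
  intro j hj
  obtain ⟨k, rfl⟩ := Fin.exists_succAbove_eq (ne_of_mem_of_not_mem hj hi)
  exact congrFun h k

theorem stmt_19_general {m : ℕ} (C : Set (Fin (m + 1) → ZMod 2)) (i : Fin (m + 1))
    (α : Set (Fin (m + 1))) (hiα : i ∉ α)
    (htrunk : trunkIn C {i} = trunkIn C α) :
    Function.Injective (fun w : ↥C => w.1 ∘ i.succAbove) := by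
  intro w v h
  have hα : Set.EqOn w.1 v.1 α := Fin.eqOn_of_comp_succAbove_eq hiα h
  exact Subtype.ext <| funext <| (Fin.forall_iff_succAbove i).2
    ⟨apply_eq_of_trunkIn_singleton_eq htrunk hα, congrFun h⟩

/-- if neuron `i` of `C` is redundant to `α` (i.e. `i ∉ α`,
`Tk_i(C) = Tk_α(C)`, and `i` is not constant zero on `C`), then the deletion
map `del_i` is injective on `C`. -/
theorem stmt_19 {m : ℕ} (C : Set (Fin (m + 1) → ZMod 2)) (i : Fin (m + 1))
    (α : Set (Fin (m + 1))) (hiα : i ∉ α)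
    (htrunk : trunkIn C {i} = trunkIn C α)
    (hnz : ¬ ∀ w ∈ C, w i = 0) :
    Function.Injective (fun w : ↥C => w.1 ∘ i.succAbove) :=
  stmt_19_general C i α hiα htrunk
end
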